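/- arXiv:1809.08700 — 4 statements merged into one kernel-verified Lean document; each statement's English description precedes it below -/
import Mathlib

section
/- Let (X, d) be a metric space of individuals, Y a finite set of outcomes, u : X × Y → [0,1] a utility function that is L-Lipschitz in its first argument (for every y ∈ Y and x, x′ ∈ X, |u(x,y) − u(x′,y)| ≤ L·d(x,x′)), and P a probability distribution on X. Let S ⊆ X be a finite set of individuals such that there exists a measurable subset X̂ ⊆ X with P(X̂) ≥ 1 − α and d(x, NN_S(x)) ≤ β/(2L) for every x ∈ X̂, where NN_S(x) denotes a nearest neighbor of x in S under d. Then for every classifier h : S → Δ(Y) that is envy free on S, the extension h̄ : X → Δ(Y) defined by h̄(x) = h(NN_S(x)) is (α, β)-envy free with respect to P. -/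
open MeasureTheory

/-! If `x ∈ X̂`, then `x` and its nearest neighbour `x₀ = NN x` have utilities within `β / 2` of
each other for every outcome, hence for every lottery. Since `x₀` does not envy `h (NN x')`,
`x` envies it by at most `β`. So every pair `(x, x')` on which the extension is violated has
`x ∉ X̂`, and such pairs have `P ⊗ P`-mass at most `P X̂ᶜ ≤ α`. -/

/-- Expected utility of individual `x` for a distribution `p` over outcomes:
`u(x,p) = E_{y ∼ p}[u(x,y)]`. -/
noncomputable def expUtil {X Y : Type*} [Fintype Y] (u : X → Y → ℝ) (x : X) (p : Y → ℝ) : ℝ :=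
  ∑ y, p y * u x y

theorem abs_expUtil_sub_le {X Y : Type*} [Fintype Y] (u : X → Y → ℝ) {p : Y → ℝ}
    (hp : p ∈ stdSimplex ℝ Y) {x x' : X} {c : ℝ} (hc : ∀ y, |u x y - u x' y| ≤ c) :
    |expUtil u x p - expUtil u x' p| ≤ c :=
  calc |expUtil u x p - expUtil u x' p| = |∑ y, p y * (u x y - u x' y)| := by
        simp only [expUtil, mul_sub, Finset.sum_sub_distrib]
    _ ≤ ∑ y, p y * c := by
        refine (Finset.abs_sum_le_sum_abs _ _).trans (Finset.sum_le_sum fun y _ => ?_)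
        rw [abs_mul, abs_of_nonneg (hp.1 y)]
        exact mul_le_mul_of_nonneg_left (hc y) (hp.1 y)
    _ = c := by rw [← Finset.sum_mul, hp.2, one_mul]

theorem expUtil_sub_le_of_close {X Y : Type*} [Fintype Y] (u : X → Y → ℝ) {p q : Y → ℝ}
    (hp : p ∈ stdSimplex ℝ Y) (hq : q ∈ stdSimplex ℝ Y) {x x₀ : X} {β : ℝ}
    (hclose : ∀ y, |u x y - u x₀ y| ≤ β / 2) (hEF : expUtil u x₀ q ≤ expUtil u x₀ p) :
    expUtil u x q - β ≤ expUtil u x p := by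
  have hp' := abs_le.1 (abs_expUtil_sub_le u hp hclose)
  have hq' := abs_le.1 (abs_expUtil_sub_le u hq hclose)
  linarith [hp'.1, hq'.2]

theorem measure_compl_le_ofReal {X : Type*} [MeasurableSpace X] (μ : Measure X)
    [IsProbabilityMeasure μ] {A : Set X} (hA : MeasurableSet A) {α : ℝ}
    (hμA : ENNReal.ofReal (1 - α) ≤ μ A) : μ Aᶜ ≤ ENNReal.ofReal α := by
  rw [prob_compl_eq_one_sub hA, tsub_le_iff_right]
  calc (1 : ENNReal) = ENNReal.ofReal (α + (1 - α)) := by norm_num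
    _ ≤ ENNReal.ofReal α + ENNReal.ofReal (1 - α) := ENNReal.ofReal_add_le
    _ ≤ ENNReal.ofReal α + μ A := by gcongr

theorem prod_le_ofReal_of_subset_compl_prod_univ {X X' : Type*} [MeasurableSpace X]
    [MeasurableSpace X'] (μ : Measure X) [IsProbabilityMeasure μ] (ν : Measure X')
    [IsProbabilityMeasure ν] {A : Set X} (hA : MeasurableSet A) {α : ℝ}
    (hμA : ENNReal.ofReal (1 - α) ≤ μ A) {s : Set (X × X')} (hs : s ⊆ Aᶜ ×ˢ Set.univ) :
    μ.prod ν s ≤ ENNReal.ofReal α :=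
  calc μ.prod ν s ≤ μ.prod ν (Aᶜ ×ˢ Set.univ) := measure_mono hs
    _ = μ Aᶜ := by rw [Measure.prod_prod, measure_univ, mul_one]
    _ ≤ ENNReal.ofReal α := measure_compl_le_ofReal μ hA hμA

theorem stmt0_general {X Y : Type*} [MetricSpace X] [MeasurableSpace X] [Fintype Y]
    (u : X → Y → ℝ)
    (L : ℝ) (hL : 0 < L)
    (hLip : ∀ y : Y, ∀ x x' : X, |u x y - u x' y| ≤ L * dist x x')
    (P : Measure X) [IsProbabilityMeasure P]
    (α β : ℝ)
    (S : Finset X) (NN : X → X)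
    (hNNmem : ∀ x, NN x ∈ S)
    (Xhat : Set X) (hXhatMeas : MeasurableSet Xhat)
    (hXhatP : ENNReal.ofReal (1 - α) ≤ P Xhat)
    (hXhatNN : ∀ x ∈ Xhat, dist x (NN x) ≤ β / (2 * L))
    (h : X → Y → ℝ) (hsimplex : ∀ x, h x ∈ stdSimplex ℝ Y)
    (hEF : ∀ x ∈ S, ∀ x' ∈ S, expUtil u x (h x') ≤ expUtil u x (h x)) :
    (P.prod P) {p : X × X |
        expUtil u p.1 (h (NN p.1)) < expUtil u p.1 (h (NN p.2)) - β}
      ≤ ENNReal.ofReal α := by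
  refine prod_le_ofReal_of_subset_compl_prod_univ P P hXhatMeas hXhatP ?_
  rintro ⟨x, x'⟩ hbad
  refine ⟨fun hx => ?_, trivial⟩
  have hclose : ∀ y, |u x y - u (NN x) y| ≤ β / 2 := fun y =>
    calc |u x y - u (NN x) y| ≤ L * (β / (2 * L)) :=
          (hLip y x (NN x)).trans (mul_le_mul_of_nonneg_left (hXhatNN x hx) hL.le)
      _ = β / 2 := by field_simp
  exact (expUtil_sub_le_of_close u (hsimplex _) (hsimplex _) hclose
    (hEF _ (hNNmem x) _ (hNNmem x'))).not_gt hbad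

/-- If `S` is such that some set `X̂` of probability mass at least `1 - α`
consists of individuals whose nearest neighbor in `S` is within distance `β / (2L)`, then the
nearest-neighbor extension of any classifier that is envy free on `S` is `(α, β)`-EF w.r.t. `P`. -/
theorem stmt0 {X Y : Type*} [MetricSpace X] [MeasurableSpace X] [Fintype Y]
    (u : X → Y → ℝ) (hu01 : ∀ x y, u x y ∈ Set.Icc (0 : ℝ) 1)
    (L : ℝ) (hL : 0 < L)
    (hLip : ∀ y : Y, ∀ x x' : X, |u x y - u x' y| ≤ L * dist x x')
    (P : Measure X) [IsProbabilityMeasure P]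
    (α β : ℝ)
    (S : Finset X) (NN : X → X)
    (hNNmem : ∀ x, NN x ∈ S)
    (hNNnear : ∀ x, ∀ x' ∈ S, dist x (NN x) ≤ dist x x')
    (Xhat : Set X) (hXhatMeas : MeasurableSet Xhat)
    (hXhatP : ENNReal.ofReal (1 - α) ≤ P Xhat)
    (hXhatNN : ∀ x ∈ Xhat, dist x (NN x) ≤ β / (2 * L))
    (h : X → Y → ℝ) (hsimplex : ∀ x, h x ∈ stdSimplex ℝ Y)
    (hEF : ∀ x ∈ S, ∀ x' ∈ S, expUtil u x (h x') ≤ expUtil u x (h x)) :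
    (P.prod P) {p : X × X |
        expUtil u p.1 (h (NN p.1)) < expUtil u p.1 (h (NN p.2)) - β}
      ≤ ENNReal.ofReal α :=
  stmt0_general u L hL hLip P α β S NN hNNmem Xhat hXhatMeas hXhatP hXhatNN h hsimplex hEF
end

section
/- Let G ⊆ {g : X → Y} be a family of functions with Natarajan dimension d, where Y is finite. For g₁, g₂ ∈ G, define (g₁,g₂) : X → Y² by (g₁,g₂)(x) = (g₁(x), g₂(x)), and let G² = {(g₁,g₂) : g₁, g₂ ∈ G}. Then the Natarajan dimension of G² (as a family of functions from X to the finite set Y × Y) is at most 2d. -/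
/-- A family `G` of functions `X → Y` multi-class shatters a finite set `T` if there are
labelings `f, f'` disagreeing on every point of `T` such that every subset `C ⊆ T` is
realized by some `g ∈ G`. -/
def MultiShatters {X Y : Type*} (G : Set (X → Y)) (T : Finset X) : Prop :=
  ∃ f f' : X → Y, (∀ x ∈ T, f x ≠ f' x) ∧
    ∀ C ⊆ T, ∃ g ∈ G, (∀ x ∈ C, g x = f x) ∧ (∀ x ∈ T, x ∉ C → g x = f' x)

/-- The Natarajan dimension of `G` is at most `d`. -/
def NatDimLE {X Y : Type*} (G : Set (X → Y)) (d : ℕ) : Prop :=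
  ∀ T : Finset X, MultiShatters G T → T.card ≤ d

/-- If `G` has Natarajan dimension at most `d`, then the family
`G² = {x ↦ (g₁(x), g₂(x)) : g₁, g₂ ∈ G}` of functions `X → Y × Y` has Natarajan dimension
at most `2d`. -/
theorem stmt7 {X Y : Type*} (G : Set (X → Y)) (d : ℕ) (hG : NatDimLE G d) :
    NatDimLE {p : X → Y × Y | ∃ g₁ ∈ G, ∃ g₂ ∈ G, p = fun x => (g₁ x, g₂ x)} (2 * d) := by
  intro T hT
  obtain ⟨f, f', hne, hreal⟩ := hT
  classical
  set T1 := T.filter (fun x => (f x).1 ≠ (f' x).1) with hT1def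
  set T2 := T.filter (fun x => ¬ (f x).1 ≠ (f' x).1) with hT2def
  have h1 : MultiShatters G T1 := by
    refine ⟨fun x => (f x).1, fun x => (f' x).1, ?_, ?_⟩
    · intro x hx; exact (Finset.mem_filter.mp hx).2
    · intro C hC
      obtain ⟨p, hp, hpc, hpnc⟩ := hreal C (hC.trans (Finset.filter_subset _ _))
      obtain ⟨g₁, hg₁, g₂, hg₂, rfl⟩ := hp
      exact ⟨g₁, hg₁, fun x hx => congrArg Prod.fst (hpc x hx),
        fun x hx hxc => congrArg Prod.fst (hpnc x ((Finset.filter_subset _ _) hx) hxc)⟩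
  have h2 : MultiShatters G T2 := by
    refine ⟨fun x => (f x).2, fun x => (f' x).2, ?_, ?_⟩
    · intro x hx h2eq
      have hm := Finset.mem_filter.mp hx
      have h1eq : (f x).1 = (f' x).1 := not_not.mp hm.2
      exact hne x hm.1 (Prod.ext h1eq h2eq)
    · intro C hC
      obtain ⟨p, hp, hpc, hpnc⟩ := hreal C (hC.trans (Finset.filter_subset _ _))
      obtain ⟨g₁, hg₁, g₂, hg₂, rfl⟩ := hp
      exact ⟨g₂, hg₂, fun x hx => congrArg Prod.snd (hpc x hx),
        fun x hx hxc => congrArg Prod.snd (hpnc x ((Finset.filter_subset _ _) hx) hxc)⟩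
  have hcard : T1.card + T2.card = T.card :=
    Finset.card_filter_add_card_filter_not _
  calc T.card = T1.card + T2.card := hcard.symm
    _ ≤ d + d := Nat.add_le_add (hG T1 h1) (hG T2 h2)
    _ = 2 * d := (Nat.two_mul d).symm
end

section
/- Let Y be a finite outcome set and Ψ : X × Y → ℝ^q a feature map. The family of deterministic classifiers G = {x ↦ argmax_{y∈Y} wᵀΨ(x,y) : w ∈ ℝ^q} (with ties broken by a fixed rule) has Natarajan dimension at most q. -/
open Finset

/-- Given a feature map `Ψ : X × Y → ℝ^q`, the family of classifiers
`x ↦ argmax_{y ∈ Y} wᵀ Ψ(x, y)` for `w ∈ ℝ^q` (ties broken by a fixed rule, here: take the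
least maximizer in a fixed linear order on `Y`) has Natarajan dimension at most `q`. -/
theorem stmt13 {X Y : Type*} [Fintype Y] [LinearOrder Y] (q : ℕ)
    (Ψ : X → Y → Fin q → ℝ) :
    NatDimLE
      {g : X → Y | ∃ w : Fin q → ℝ, ∀ x,
        (∀ y, ∑ i, w i * Ψ x y i ≤ ∑ i, w i * Ψ x (g x) i) ∧
        (∀ y, (∑ i, w i * Ψ x (g x) i ≤ ∑ i, w i * Ψ x y i) → g x ≤ y)} q := by
  classical
  intro T hT
  obtain ⟨f, f', hne, hreal⟩ := hT
  set v : X → Fin q → ℝ := fun x i => Ψ x (f x) i - Ψ x (f' x) i with hvdef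
  have hli : LinearIndependent ℝ (fun x : ↥T => v (x : X)) := by
    rw [Fintype.linearIndependent_iff]
    intro c hc
    by_contra hcon
    push_neg at hcon
    obtain ⟨x₀, hx₀⟩ := hcon
    -- sign normalization
    set s : ℝ := if f' (x₀ : X) < f (x₀ : X) then (if 0 < c x₀ then 1 else -1)
      else (if c x₀ < 0 then 1 else -1) with hsdef
    set d : X → ℝ := fun x => if h : x ∈ T then s * c ⟨x, h⟩ else 0 with hddef
    have hdx : ∀ x : ↥T, d (x : X) = s * c x := by
      intro x
      simp [hddef, x.2]
    have hd0 : if f' (x₀ : X) < f (x₀ : X) then 0 < d (x₀ : X) else d (x₀ : X) < 0 := by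
      rw [hdx x₀, hsdef]
      split_ifs with h1 h2 h2
      · linarith
      · have hcneg : c x₀ < 0 := lt_of_le_of_ne (not_lt.mp h2) hx₀
        linarith
      · linarith
      · have hcpos : 0 < c x₀ := lt_of_le_of_ne (not_lt.mp h2) (Ne.symm hx₀)
        linarith
    -- the subset realized
    set C : Finset X := T.filter (fun x => if f' x < f x then 0 < d x else 0 ≤ d x) with hCdef
    obtain ⟨g, hg, hgC, hgC'⟩ := hreal C (filter_subset _ _)
    obtain ⟨w, hw⟩ := hg
    set A : X → ℝ := fun x => ∑ i, w i * v x i with hAdef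
    have hA : ∀ x, A x = (∑ i, w i * Ψ x (f x) i) - (∑ i, w i * Ψ x (f' x) i) := by
      intro x
      simp [hAdef, hvdef, mul_sub, Finset.sum_sub_distrib]
    have hApos : ∀ x ∈ T, x ∈ C → 0 ≤ A x ∧ (f' x < f x → 0 < A x) := by
      intro x hxT hxC
      have hgx : g x = f x := hgC x hxC
      have h1 := (hw x).1 (f' x)
      rw [hgx] at h1
      have hnn : 0 ≤ A x := by rw [hA]; linarith
      refine ⟨hnn, fun hlt => ?_⟩
      rcases hnn.lt_or_eq with h | h
      · exact h
      · exfalso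
        have h2 := (hw x).2 (f' x)
        rw [hgx] at h2
        have : f x ≤ f' x := h2 (by rw [hA] at h; linarith)
        exact absurd this (not_le.mpr hlt)
    have hAneg : ∀ x ∈ T, x ∉ C → A x ≤ 0 ∧ (f x < f' x → A x < 0) := by
      intro x hxT hxC
      have hgx : g x = f' x := hgC' x hxT hxC
      have h1 := (hw x).1 (f x)
      rw [hgx] at h1
      have hnp : A x ≤ 0 := by rw [hA]; linarith
      refine ⟨hnp, fun hlt => ?_⟩
      rcases hnp.lt_or_eq with h | h
      · exact h
      · exfalso
        have h2 := (hw x).2 (f x)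
        rw [hgx] at h2
        have : f' x ≤ f x := h2 (by rw [hA] at h; linarith)
        exact absurd this (not_le.mpr hlt)
    -- the key sum is zero
    have hci : ∀ i, ∑ x : ↥T, c x * v (x : X) i = 0 := by
      intro i
      have := congrFun hc i
      simpa [Finset.sum_apply] using this
    have hsum : ∑ x : ↥T, d (x : X) * A (x : X) = 0 := by
      have step1 : ∀ x : ↥T, d (x : X) * A (x : X)
          = ∑ i, w i * (d (x : X) * v (x : X) i) := by
        intro x
        rw [hAdef]
        simp only [Finset.mul_sum]
        exact Finset.sum_congr rfl fun i _ => by ring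
      calc ∑ x : ↥T, d (x : X) * A (x : X)
          = ∑ x : ↥T, ∑ i, w i * (d (x : X) * v (x : X) i) := by
            exact Finset.sum_congr rfl fun x _ => step1 x
        _ = ∑ i, ∑ x : ↥T, w i * (d (x : X) * v (x : X) i) := Finset.sum_comm
        _ = 0 := by
            apply Finset.sum_eq_zero
            intro i _
            have : ∑ x : ↥T, d (x : X) * v (x : X) i
                = s * ∑ x : ↥T, c x * v (x : X) i := by
              rw [Finset.mul_sum]
              exact Finset.sum_congr rfl fun x _ => by rw [hdx x]; ring
            calc ∑ x : ↥T, w i * (d (x : X) * v (x : X) i)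
                = w i * ∑ x : ↥T, d (x : X) * v (x : X) i := by rw [Finset.mul_sum]
              _ = 0 := by rw [this, hci i]; ring
    -- but the sum is positive
    have hterm_nonneg : ∀ x : ↥T, 0 ≤ d (x : X) * A (x : X) := by
      intro x
      by_cases hxC : (x : X) ∈ C
      · have hd : 0 ≤ d (x : X) := by
          have := (Finset.mem_filter.mp hxC).2
          split at this
          · exact le_of_lt this
          · exact this
        exact mul_nonneg hd (hApos x x.2 hxC).1
      · have hd : d (x : X) ≤ 0 := by
          have : ¬ (if f' (x : X) < f (x : X) then 0 < d (x : X) else 0 ≤ d (x : X)) := by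
            intro hcond
            exact hxC (Finset.mem_filter.mpr ⟨x.2, hcond⟩)
          split at this
          · exact le_of_not_gt this
          · exact le_of_lt (lt_of_not_ge this)
        nlinarith [(hAneg x x.2 hxC).1]
    have hterm_pos : 0 < d (x₀ : X) * A (x₀ : X) := by
      have hne0 : f (x₀ : X) ≠ f' (x₀ : X) := hne _ x₀.2
      split at hd0
      · -- f' x₀ < f x₀, d x₀ > 0, so x₀ ∈ C and A x₀ > 0
        rename_i hlt
        have hxC : (x₀ : X) ∈ C :=
          Finset.mem_filter.mpr ⟨x₀.2, by rw [if_pos hlt]; exact hd0⟩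
        exact mul_pos hd0 ((hApos _ x₀.2 hxC).2 hlt)
      · rename_i hnlt
        have hlt : f (x₀ : X) < f' (x₀ : X) := lt_of_le_of_ne (le_of_not_gt hnlt) hne0
        have hxC : (x₀ : X) ∉ C := by
          intro hxC
          have := (Finset.mem_filter.mp hxC).2
          rw [if_neg hnlt] at this
          linarith
        exact mul_pos_of_neg_of_neg hd0 ((hAneg _ x₀.2 hxC).2 hlt)
    have : 0 < ∑ x : ↥T, d (x : X) * A (x : X) :=
      Finset.sum_pos' (fun x _ => hterm_nonneg x) ⟨x₀, Finset.mem_univ _, hterm_pos⟩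
    rw [hsum] at this
    exact lt_irrefl 0 this
  have hcard := hli.fintype_card_le_finrank
  simpa [Fintype.card_coe, Module.finrank_fin_fun] using hcard
end

section
/- Let X be a set, Y a finite outcome set, u : X × Y → [0,1] a utility function, and S = {(x_i, x_i′)}_{i=1}^n a set of pairs of individuals. Suppose h, ĥ : X → Δ(Y) are classifiers such that ‖h(x) − ĥ(x)‖₁ ≤ γ holds for both coordinates of all but at most a 4γ-fraction of the pairs in S. If h is (α,β)-pairwise EF on S, then ĥ is (α + 4γ, β + 2γ)-pairwise EF on S. -/
open Finset

lemma expUtil_diff {X Y : Type*} [Fintype Y] (u : X → Y → ℝ)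
    (hu : ∀ x y, u x y ∈ Set.Icc (0 : ℝ) 1) (z : X) (p q : Y → ℝ) :
    |expUtil u z p - expUtil u z q| ≤ ∑ y, |p y - q y| := by
  unfold expUtil
  rw [← Finset.sum_sub_distrib]
  refine (Finset.abs_sum_le_sum_abs _ _).trans (Finset.sum_le_sum fun y _ => ?_)
  rw [← sub_mul, abs_mul]
  have := hu z y
  calc |p y - q y| * |u z y| ≤ |p y - q y| * 1 := by
        apply mul_le_mul_of_nonneg_left _ (abs_nonneg _)
        rw [abs_le]; constructor <;> linarith [this.1, this.2]
    _ = |p y - q y| := mul_one _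

open scoped Classical in
/-- For a sample of pairs `S = {(xᵢ, xᵢ')}ᵢ`, if `‖h(x) - ĥ(x)‖₁ ≤ γ` holds
for both coordinates of all but at most a `4γ`-fraction of the pairs, and `h` is
`(α, β)`-pairwise EF on `S`, then `ĥ` is `(α + 4γ, β + 2γ)`-pairwise EF on `S`. -/
theorem stmt15 {X Y : Type*} [Fintype Y]
    (u : X → Y → ℝ) (hu : ∀ x y, u x y ∈ Set.Icc (0 : ℝ) 1)
    (n : ℕ) (hn : 0 < n) (x x' : Fin n → X)
    (h hh : X → Y → ℝ)
    (hmem : ∀ z, h z ∈ stdSimplex ℝ Y) (hhmem : ∀ z, hh z ∈ stdSimplex ℝ Y)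
    (γ α β : ℝ) (hγ : 0 ≤ γ)
    (hclose : ((Finset.univ.filter fun i : Fin n =>
        ¬((∑ y, |h (x i) y - hh (x i) y| ≤ γ) ∧
          (∑ y, |h (x' i) y - hh (x' i) y| ≤ γ))).card : ℝ) ≤ 4 * γ * n)
    (hEF : ((Finset.univ.filter fun i : Fin n =>
        expUtil u (x i) (h (x i)) < expUtil u (x i) (h (x' i)) - β).card : ℝ) / n ≤ α) :
    ((Finset.univ.filter fun i : Fin n =>
        expUtil u (x i) (hh (x i)) < expUtil u (x i) (hh (x' i)) - (β + 2 * γ)).card : ℝ) / n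
      ≤ α + 4 * γ := by
  set A := Finset.univ.filter fun i : Fin n =>
      expUtil u (x i) (h (x i)) < expUtil u (x i) (h (x' i)) - β
  set B := Finset.univ.filter fun i : Fin n =>
      ¬((∑ y, |h (x i) y - hh (x i) y| ≤ γ) ∧ (∑ y, |h (x' i) y - hh (x' i) y| ≤ γ))
  set C := Finset.univ.filter fun i : Fin n =>
      expUtil u (x i) (hh (x i)) < expUtil u (x i) (hh (x' i)) - (β + 2 * γ)
  have hsub : C ⊆ A ∪ B := by
    intro i hi
    simp only [C, Finset.mem_filter, Finset.mem_univ, true_and] at hi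
    by_contra hc
    simp only [A, B, Finset.mem_union, Finset.mem_filter, Finset.mem_univ, true_and,
      not_or, not_lt, not_not] at hc
    obtain ⟨h1, h2, h3⟩ := hc
    have d1 := abs_le.1 (expUtil_diff u hu (x i) (h (x i)) (hh (x i)))
    have d2 := abs_le.1 (expUtil_diff u hu (x i) (h (x' i)) (hh (x' i)))
    linarith [d1.1, d1.2, d2.1, d2.2]
  have hcard : (C.card : ℝ) ≤ (A.card : ℝ) + (B.card : ℝ) := by
    have := Finset.card_union_le A B
    have h2 := Finset.card_le_card hsub
    exact_mod_cast h2.trans this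
  have hnpos : (0 : ℝ) < n := by exact_mod_cast hn
  rw [div_le_iff₀ hnpos] at hEF ⊢
  calc (C.card : ℝ) ≤ (A.card : ℝ) + (B.card : ℝ) := hcard
    _ ≤ α * n + 4 * γ * n := add_le_add hEF hclose
    _ = (α + 4 * γ) * n := by ring
end
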